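/- Let δ ∈ S* ∪ {λ} and let p = p*_{η₁,δ,S₁}, q = p*_{η₂,δ,S₂} ∈ Q_δ with η₁ ⊴ η₂, tr(p) ∈ q and tr(q) ∈ p. Then p ∩ q = p*_{η₂,δ,S₁∪S₂} ∈ Q_δ; in particular two conditions of Q_δ are compatible if and only if each one's trunk belongs to the other. -/

import Mathlib

open Set Ordinal

namespace RRF

/-- `C` is a closed unbounded (club) subset of the ordinal `δ`. -/
def ClubIn (C : Set Ordinal) (δ : Ordinal) : Prop :=
  (∀ α < δ, ∃ β ∈ C, α < β ∧ β < δ) ∧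
  (∀ α, 0 < α → α < δ → (∀ β < α, ∃ γ ∈ C, β < γ ∧ γ < α) → α ∈ C)

/-- `S` is stationary in `δ`: it meets every club of `δ`. -/
def StatIn (S : Set Ordinal) (δ : Ordinal) : Prop :=
  ∀ C, ClubIn C δ → (S ∩ C).Nonempty

/-- `S` is tenuous (nowhere stationary): for every ordinal `δ` of
uncountable cofinality, `S ∩ δ` is not stationary in `δ`. -/
def Tenuous (S : Set Ordinal) : Prop :=
  ∀ δ : Ordinal, Cardinal.aleph0 < δ.cof → ¬ StatIn (S ∩ Iio δ) δ

end RRF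

namespace RRF

/-- A node: a padded sequence of ordinals, given by its length together with a
function which is `0` from the length onwards. -/
abbrev Node : Type 1 := Ordinal × (Ordinal → Ordinal)

namespace Node

/-- The length of a node. -/
def lg (η : Node) : Ordinal := η.1

/-- Restriction of a node to length `β`. -/
noncomputable def restrict (η : Node) (β : Ordinal) : Node :=
  (min β η.1, fun ε => if ε < min β η.1 then η.2 ε else 0)

/-- `η ⊴ ν` : `η` is an initial segment of `ν`. -/
def Below (η ν : Node) : Prop := η.1 ≤ ν.1 ∧ ∀ ε < η.1, η.2 ε = ν.2 ε

/-- The empty sequence. -/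
def emptyNode : Node := (0, fun _ => 0)

/-- `η⌢⟨j⟩` : the immediate successor of `η` with last value `j`. -/
noncomputable def ext (η : Node) (j : Ordinal) : Node :=
  (η.1 + 1, fun ε => if ε < η.1 then η.2 ε else if ε = η.1 then j else 0)

end Node

/-- `η` is a genuine (padded) sequence with `η(ε) < θ ε` for `ε < lg η`. -/
def IsSeq (θ : Ordinal → Cardinal) (η : Node) : Prop :=
  (∀ ε < η.1, η.2 ε < (θ ε).ord) ∧ ∀ ε, ¬ ε < η.1 → η.2 ε = 0

/-- `T_{<δ}` : the full tree of sequences of length `< δ`. -/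
def Ttree (θ : Ordinal → Cardinal) (δ : Ordinal) : Set Node :=
  {η | η.1 < δ ∧ IsSeq θ η}

/-- `T_ε` : the `ε`-th level of the full tree. -/
def Level (θ : Ordinal → Cardinal) (ε : Ordinal) : Set Node :=
  {η | η.1 = ε ∧ IsSeq θ η}

/-- `lim_δ(u)` : length-`δ` sequences all of whose proper restrictions lie in `u`. -/
def limNodes (θ : Ordinal → Cardinal) (δ : Ordinal) (u : Set Node) : Set Node :=
  {ν | ν.1 = δ ∧ IsSeq θ ν ∧ ∀ β < δ, ν.restrict β ∈ u}

end RRF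

namespace RRF

/-- `p^{[η]}` : the nodes of `p` comparable with `η` which extend `η` or are
initial segments of it. -/
def restrTree (p : Set Node) (η : Node) : Set Node :=
  {ρ ∈ p | Node.Below η ρ ∨ Node.Below ρ η}

/-- `η` is the trunk of `p` : it is comparable with every node of `p` and is
`⊴`-maximal with this property. -/
def IsTrunk (p : Set Node) (η : Node) : Prop :=
  η ∈ p ∧ (∀ ν ∈ p, Node.Below ν η ∨ Node.Below η ν) ∧
    ∀ η' ∈ p, (∀ ν ∈ p, Node.Below ν η' ∨ Node.Below η' ν) → Node.Below η' η

/-- `p` is a tree: nonempty and closed under restrictions. -/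
def IsTree (p : Set Node) : Prop :=
  p.Nonempty ∧ ∀ η ∈ p, ∀ β ≤ η.1, η.restrict β ∈ p

/-- `S_p` : the set of pruning levels of `p` below `δ` — limit levels `δ₁ < δ`
at which some node has all proper restrictions in `p` but is itself not in `p`. -/
def pruneSet (θ : Ordinal → Cardinal) (δ : Ordinal) (p : Set Node) : Set Ordinal :=
  {δ₁ | δ₁ < δ ∧ Order.IsSuccLimit δ₁ ∧ ∃ η ∈ Level θ δ₁, η ∉ p ∧ ∀ β < δ₁, η.restrict β ∈ p}

/-- `p` is a condition of the forcing `Q⁰_δ`. -/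
structure IsCond0 (θ : Ordinal → Cardinal) (Sstar : Set Ordinal) (δ : Ordinal)
    (p : Set Node) : Prop where
  subset : p ⊆ Ttree θ δ
  tree : IsTree p
  trunk : ∃ η, IsTrunk p η
  levels : ∀ η ∈ p, ∀ β, η.1 ≤ β → β < δ → ∃ ν ∈ p, ν.1 = β ∧ Node.Below η ν
  branches : ∀ η ∈ p, ∃ ν ∈ limNodes θ δ p, Node.Below η ν
  fullSucc : ∀ t, IsTrunk p t → ∀ η ∈ p, Node.Below t η →
      ∀ j < ((θ η.1).ord), η.ext j ∈ p
  pruneSub : pruneSet θ δ p ⊆ Sstar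
  pruneTen : Tenuous (pruneSet θ δ p)
  pruneGt : ∀ t, IsTrunk p t → ∀ δ₁ ∈ pruneSet θ δ p, t.1 < δ₁

/-- Compatibility in `Q⁰_δ` (order is reverse inclusion). -/
def Compat0 (θ : Ordinal → Cardinal) (Sstar : Set Ordinal) (δ : Ordinal)
    (p q : Set Node) : Prop :=
  ∃ r, IsCond0 θ Sstar δ r ∧ r ⊆ p ∧ r ⊆ q

/-- Membership in `Ξ_δ` for a family `⟨q_η : η ∈ Λ⟩`. -/
structure IsXi (θ : Ordinal → Cardinal) (Sstar : Set Ordinal) (δ : Ordinal)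
    (Λ : Set Node) (q : Node → Set Node) : Prop where
  sub : Λ ⊆ Ttree θ δ
  cond : ∀ η ∈ Λ, IsCond0 θ Sstar δ (q η)
  trunk : ∀ η ∈ Λ, IsTrunk (q η) η
  anti : ∀ η ∈ Λ, ∀ ν ∈ Λ, η ≠ ν → η ∉ q ν ∨ ν ∉ q η
  union : IsCond0 θ Sstar δ (⋃ η ∈ Λ, q η)

/-- The coder of `⟨q_η : η ∈ Λ⟩`. -/
def coder (Λ : Set Node) (q : Node → Set Node) : Set (Node × Node) :=
  {x | x.1 ∈ Λ ∧ x.2 ∈ q x.1}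

end RRF

namespace RRF

-- The recursively defined condition `p*_{η,δ,S}`, relative to abstract
-- "successful level" data `succl`, `rst` (= `r*_δ`), `Λst` (= `Λ*_δ`) and
-- `qst` (= `⟨q*_{δ,η'}⟩`).
open Classical in
noncomputable def pstar (θ : Ordinal → Cardinal) (succl : Ordinal → Prop)
    (rst : Ordinal → Set Node) (Λst : Ordinal → Set Node)
    (qst : Ordinal → Node → Set Node) :
    Ordinal → Node → Set Ordinal → Set Node :=
  WellFounded.fix (wellFounded_lt)
    (fun δ rec η S =>
      if sSup S ≤ η.1 then
        -- case (a): `(T_{<δ})^{[η]}`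
        restrTree (Ttree θ δ) η
      else if _hmem : sSup S ∈ S then
        if hlt : sSup S < δ then
          if succl (sSup S) then
            -- case (d): last element `δ₁ = sSup S` is successful
            {ν ∈ Ttree θ δ |
              (ν.1 < sSup S ∧ ν ∈ rec (sSup S) hlt η (S ∩ Set.Iio (sSup S))) ∨
              (sSup S ≤ ν.1 ∧
                ν.restrict (sSup S) ∈
                  limNodes θ (sSup S) (rec (sSup S) hlt η (S ∩ Set.Iio (sSup S))) ∧
                (ν.restrict (sSup S) ∈ limNodes θ (sSup S) (rst (sSup S)) →
                  ∃ η' ∈ Λst (sSup S),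
                    ν.restrict (sSup S) ∈ limNodes θ (sSup S) (qst (sSup S) η')))}
          else
            -- case (c): last element `δ₁ = sSup S` is not successful
            {ν ∈ Ttree θ δ |
              (ν.1 < sSup S ∧ ν ∈ rec (sSup S) hlt η (S ∩ Set.Iio (sSup S))) ∨
              (sSup S ≤ ν.1 ∧
                ν.restrict (sSup S) ∈
                  limNodes θ (sSup S) (rec (sSup S) hlt η (S ∩ Set.Iio (sSup S))))}
        else ∅
      else
        -- case (b): `S` unbounded above `lg η` with no last element
        {ν ∈ Ttree θ δ |
          Node.Below ν η ∨
          (Node.Below η ν ∧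
            ((∃ δ₁, ∃ h : δ₁ < δ, δ₁ ∈ S ∧ ν.1 < δ₁ ∧
                ν ∈ rec δ₁ h η (S ∩ Set.Iio δ₁)) ∨
             (sSup S ≤ ν.1 ∧ ∀ δ₁, ∀ h : δ₁ < δ, δ₁ ∈ S → η.1 < δ₁ →
                ∀ ζ < δ₁, ν.restrict ζ ∈ rec δ₁ h η (S ∩ Set.Iio δ₁))))})

/-- Membership in the main forcing `Q_δ`. -/
def IsCondQ (θ : Ordinal → Cardinal) (succl : Ordinal → Prop)
    (rst Λst : Ordinal → Set Node) (qst : Ordinal → Node → Set Node)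
    (Sstar : Set Ordinal) (δ : Ordinal) (p : Set Node) : Prop :=
  ∃ η ∈ Ttree θ δ, ∃ S, S ⊆ Sstar ∩ Set.Iio δ ∧ Tenuous S ∧
    p = pstar θ succl rst Λst qst δ η S

/-- Membership in the forcing `Q'_δ`. -/
def IsCondQ' (θ : Ordinal → Cardinal) (succl : Ordinal → Prop)
    (rst Λst : Ordinal → Set Node) (qst : Ordinal → Node → Set Node)
    (Sstar : Set Ordinal) (δ : Ordinal) (p : Set Node) : Prop :=
  IsCond0 θ Sstar δ p ∧
  ∀ δ₁ ∈ Sstar, δ₁ < δ → (∀ t, IsTrunk p t → t.1 < δ₁) →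
    IsCondQ θ succl rst Λst qst Sstar δ₁ (p ∩ Ttree θ δ₁)

end RRF

/-!
Unwinding the recursion, `p*_{η,δ,S}` is the set of nodes of `T_{<δ}` comparable with `η` whose
restriction to each level `γ ∈ S` above `lg η` passes the test of the successful level `γ`:
if it is a branch of `r*_γ` then it is a branch of some `q*_{γ,η'}`. The recursion only needs the
levels of `S` to be limits, so that a test at `γ` is already visible below any larger level of `S`.

In this closed form, if `η₁ ⊴ η₂` and `η₂` passes the tests of `S₁`, a node lies in both
conditions exactly when it is comparable with `η₂` and passes the tests of `S₁ ∪ S₂`; and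
`S₁ ∪ S₂` is tenuous since two clubs of an ordinal of uncountable cofinality meet in a club.
The trunk of `p*_{η,δ,S}` is `η`, because all immediate successors of `η` belong to it and
`θ ≥ 2`. Hence a common extension `r` of `p` and `q` contains their trunks, which then lie in
`q` and `p`; conversely, trunks lying in each other are comparable, and the intersection
formula exhibits `p ∩ q` as a condition of `Q_δ`.
-/

namespace RRF

open Node

namespace Node

variable {η ν ρ : Node} {β γ : Ordinal}

theorem below_refl (η : Node) : Below η η := ⟨le_rfl, fun _ _ => rfl⟩

theorem below_trans (h₁ : Below η ν) (h₂ : Below ν ρ) : Below η ρ :=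
  ⟨h₁.1.trans h₂.1, fun ε hε => (h₁.2 ε hε).trans (h₂.2 ε (hε.trans_le h₁.1))⟩

theorem below_of_below_of_le (h : Below η ν) (hle : ν.1 ≤ η.1) : Below ν η :=
  ⟨hle, fun ε hε => (h.2 ε (hε.trans_le hle)).symm⟩

theorem eq_of_below (hη : ∀ ε, ¬ ε < η.1 → η.2 ε = 0) (hν : ∀ ε, ¬ ε < ν.1 → ν.2 ε = 0)
    (h : Below η ν) (hle : ν.1 ≤ η.1) : η = ν := by
  have hlg : η.1 = ν.1 := le_antisymm h.1 hle
  refine Prod.ext hlg (funext fun ε => ?_)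
  by_cases hε : ε < η.1
  · exact h.2 ε hε
  · rw [hη ε hε, hν ε (hlg ▸ hε)]

theorem below_or_below (h₁ : Below η ν) (h₂ : Below ρ ν) : Below η ρ ∨ Below ρ η := by
  rcases le_total η.1 ρ.1 with h | h
  · exact Or.inl ⟨h, fun ε hε => (h₁.2 ε hε).trans (h₂.2 ε (hε.trans_le h)).symm⟩
  · exact Or.inr ⟨h, fun ε hε => (h₂.2 ε hε).trans (h₁.2 ε (hε.trans_le h)).symm⟩

theorem below_restrict (ν : Node) (β : Ordinal) : Below (ν.restrict β) ν :=
  ⟨min_le_right _ _, fun _ hε => if_pos hε⟩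

theorem restrict_restrict (ν : Node) (h : γ ≤ β) :
    (ν.restrict β).restrict γ = ν.restrict γ := by
  have hmin : min γ (min β ν.1) = min γ ν.1 := by rw [← min_assoc, min_eq_left h]
  refine Prod.ext hmin (funext fun ε => ?_)
  simp only [restrict, hmin]
  split_ifs with h₁ h₂ <;> first | rfl | exact absurd (h₁.trans_le (min_le_min_right _ h)) h₂

theorem restrict_eq_restrict_of_below (h : Below η ν) (hβ : β ≤ η.1) :
    η.restrict β = ν.restrict β := by
  have hη : min β η.1 = β := min_eq_left hβ
  have hν : min β ν.1 = β := min_eq_left (hβ.trans h.1)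
  refine Prod.ext (hη.trans hν.symm) (funext fun ε => ?_)
  simp only [restrict, hη, hν]
  split_ifs with hε
  · exact h.2 ε (hε.trans_le hβ)
  · rfl

theorem restrict_below (h : Below η ν) (hβ : min β ν.1 ≤ η.1) : Below (ν.restrict β) η :=
  ⟨hβ, fun ε hε => (if_pos hε).trans (h.2 ε (hε.trans_le hβ)).symm⟩

theorem below_restrict_of_le (h : Below η ν) (hβ : η.1 ≤ β) : Below η (ν.restrict β) :=
  ⟨le_min hβ h.1, fun ε hε => (h.2 ε hε).trans (if_pos (hε.trans_le (le_min hβ h.1))).symm⟩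

theorem below_of_restrict_below (hle : η.1 ≤ ν.1) (h : Below (ν.restrict η.1) η) :
    Below η ν := by
  have hlg : min η.1 ν.1 = η.1 := min_eq_left hle
  refine ⟨hle, fun ε hε => ?_⟩
  have hε' : ε < min η.1 ν.1 := by rwa [hlg]
  exact (h.2 ε hε').symm.trans (if_pos hε')

theorem below_ext (η : Node) (j : Ordinal) : Below η (η.ext j) :=
  ⟨(Order.lt_add_one_iff.2 le_rfl).le, fun _ hε => (if_pos hε).symm⟩

theorem ext_snd_self (η : Node) (j : Ordinal) : (η.ext j).2 η.1 = j := by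
  simp [ext]

theorem snd_eq_of_comparable_ext {j : Ordinal} (hlt : η.1 < ν.1)
    (h : Below (η.ext j) ν ∨ Below ν (η.ext j)) : ν.2 η.1 = j := by
  rcases h with h | h
  · exact (h.2 η.1 (Order.lt_add_one_iff.2 le_rfl)).symm.trans (ext_snd_self η j)
  · exact (h.2 η.1 hlt).trans (ext_snd_self η j)

theorem below_of_comparable_exts (h : Below η ν)
    (h₀ : Below (η.ext 0) ν ∨ Below ν (η.ext 0)) (h₁ : Below (η.ext 1) ν ∨ Below ν (η.ext 1)) :
    Below ν η := by
  by_contra hνη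
  have hlt : η.1 < ν.1 := lt_of_not_ge fun hle => hνη (below_of_below_of_le h hle)
  exact zero_ne_one ((snd_eq_of_comparable_ext hlt h₀).symm.trans (snd_eq_of_comparable_ext hlt h₁))

end Node

theorem isSeq_restrict {θ : Ordinal → Cardinal} {ν : Node} (h : IsSeq θ ν) (β : Ordinal) :
    IsSeq θ (ν.restrict β) := by
  refine ⟨fun ε hε => ?_, fun ε hε => if_neg hε⟩
  exact (if_pos hε).trans_lt (h.1 ε (hε.trans_le (min_le_right _ _)))

theorem isSeq_ext {θ : Ordinal → Cardinal} {η : Node} (h : IsSeq θ η) {j : Ordinal}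
    (hj : j < (θ η.1).ord) : IsSeq θ (η.ext j) := by
  refine ⟨fun ε hε => ?_, fun ε hε => ?_⟩
  · rcases (Order.lt_add_one_iff.1 hε).lt_or_eq with hlt | rfl
    · exact (if_pos hlt).trans_lt (h.1 ε hlt)
    · rwa [ext_snd_self]
  · have hlt : ¬ ε < η.1 := fun h' => hε (h'.trans (Order.lt_add_one_iff.2 le_rfl))
    have hne : ε ≠ η.1 := fun h' => hε (h' ▸ Order.lt_add_one_iff.2 le_rfl)
    simp [Node.ext, hlt, hne]

theorem restrict_mem_limNodes_iff {θ : Ordinal → Cardinal} {ν : Node} {γ : Ordinal}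
    {P : Set Node} (hγ : γ ≤ ν.1) (hν : IsSeq θ ν) :
    ν.restrict γ ∈ limNodes θ γ P ↔ ∀ β < γ, ν.restrict β ∈ P := by
  refine ⟨fun h β hβ => ?_, fun h => ⟨min_eq_left hγ, isSeq_restrict hν γ, fun β hβ => ?_⟩⟩
  · rw [← restrict_restrict ν hβ.le]
    exact h.2.2 β hβ
  · rw [restrict_restrict ν hβ.le]
    exact h β hβ

section Pruning

variable (allowed : Ordinal → Node → Prop)

def Survives (S : Set Ordinal) (η ν : Node) : Prop :=
  ∀ γ ∈ S, η.1 < γ → γ ≤ ν.1 → allowed γ (ν.restrict γ)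

def Admissible (S : Set Ordinal) (η ν : Node) : Prop :=
  Below ν η ∨ (Below η ν ∧ Survives allowed S η ν)

def prunedTree (θ : Ordinal → Cardinal) (δ : Ordinal) (η : Node) (S : Set Ordinal) :
    Set Node :=
  {ν ∈ Ttree θ δ | Admissible allowed S η ν}

variable {allowed} {θ : Ordinal → Cardinal} {S S₁ S₂ T : Set Ordinal} {η η₁ η₂ ν : Node}
  {γ δ : Ordinal}

theorem survives_of_le (h : ν.1 ≤ η.1) : Survives allowed S η ν :=
  fun _ _ hηγ hγν => absurd (hγν.trans h) (not_le.2 hηγ)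

theorem admissible_iff_survives (h : Below η ν) :
    Admissible allowed S η ν ↔ Survives allowed S η ν :=
  ⟨fun h' => h'.elim (fun hνη => survives_of_le hνη.1) And.right, fun h' => Or.inr ⟨h, h'⟩⟩

theorem survives_union :
    Survives allowed (S ∪ T) η ν ↔ Survives allowed S η ν ∧ Survives allowed T η ν :=
  ⟨fun h => ⟨fun γ hγ => h γ (Or.inl hγ), fun γ hγ => h γ (Or.inr hγ)⟩,
    fun h γ hγ => hγ.elim (h.1 γ) (h.2 γ)⟩

theorem survives_singleton :
    Survives allowed {γ} η ν ↔ (η.1 < γ → γ ≤ ν.1 → allowed γ (ν.restrict γ)) := by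
  simp [Survives]

theorem survives_inter_Iio_iff (h : ν.1 < γ) :
    Survives allowed (S ∩ Iio γ) η ν ↔ Survives allowed S η ν :=
  ⟨fun h' γ' hγ' hηγ' hγ'ν => h' γ' ⟨hγ', hγ'ν.trans_lt h⟩ hηγ' hγ'ν,
    fun h' γ' hγ' => h' γ' hγ'.1⟩

theorem admissible_inter_Iio_iff (h : ν.1 < γ) :
    Admissible allowed (S ∩ Iio γ) η ν ↔ Admissible allowed S η ν := by
  rw [Admissible, Admissible, survives_inter_Iio_iff h]

theorem survives_iff_forall_inter_Iio (hS : ∀ γ ∈ S, ∃ γ' ∈ S, γ < γ') :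
    Survives allowed S η ν ↔ ∀ γ ∈ S, η.1 < γ → Survives allowed (S ∩ Iio γ) η ν := by
  refine ⟨fun h γ _ _ γ' hγ' => h γ' hγ'.1, fun h γ hγ hηγ hγν => ?_⟩
  obtain ⟨γ', hγ', hγγ'⟩ := hS γ hγ
  exact h γ' hγ' (hηγ.trans hγγ') γ ⟨hγ, hγγ'⟩ hηγ hγν

theorem Survives.of_below {ν' : Node} (h : Survives allowed S η ν') (hν : Below ν ν') :
    Survives allowed S η ν := fun γ hγ hηγ hγν =>
  restrict_eq_restrict_of_below hν hγν ▸ h γ hγ hηγ (hγν.trans hν.1)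

theorem survives_iff_of_below (h₁₂ : Below η₁ η₂) (h₂ : Below η₂ ν) :
    Survives allowed S η₁ ν ↔ Survives allowed S η₁ η₂ ∧ Survives allowed S η₂ ν := by
  refine ⟨fun h => ⟨h.of_below h₂, fun γ hγ hηγ hγν => h γ hγ (h₁₂.1.trans_lt hηγ) hγν⟩,
    fun h γ hγ hηγ hγν => ?_⟩
  rcases le_or_gt γ η₂.1 with hγη | hηγ'
  · exact restrict_eq_restrict_of_below h₂ hγη ▸ h.1 γ hγ hηγ hγη
  · exact h.2 γ hγ hηγ' hγν

theorem survives_ext (hS : ∀ γ ∈ S, Order.IsSuccLimit γ) (j : Ordinal) :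
    Survives allowed S η (η.ext j) := fun γ hγ hηγ hγη =>
  absurd ((hS γ hγ).add_one_lt hηγ) (not_lt.2 hγη)

theorem Admissible.restrict (h : Admissible allowed S η ν) (β : Ordinal) :
    Admissible allowed S η (ν.restrict β) := by
  rcases h with hνη | ⟨hην, hsurv⟩
  · exact Or.inl (below_trans (below_restrict ν β) hνη)
  · by_cases hβ : min β ν.1 ≤ η.1
    · exact Or.inl (restrict_below hην hβ)
    · exact Or.inr ⟨below_restrict_of_le hην ((not_le.1 hβ).le.trans (min_le_left _ _)),
        hsurv.of_below (below_restrict ν β)⟩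

theorem forall_restrict_mem_prunedTree_iff (hγ : Order.IsSuccLimit γ) (hηγ : η.1 < γ)
    (hγν : γ ≤ ν.1) (hν : IsSeq θ ν) (hS : S ⊆ Iio γ) :
    (∀ ζ < γ, ν.restrict ζ ∈ prunedTree allowed θ γ η S) ↔
      Below η ν ∧ Survives allowed S η ν := by
  constructor
  · intro h
    have hην : Below η ν := by
      rcases (h η.1 hηγ).2 with h' | ⟨h', -⟩
      · exact below_of_restrict_below (hηγ.le.trans hγν) h'
      · exact below_trans h' (below_restrict ν _)
    refine ⟨hην, fun γ' hγ' hηγ' hγ'ν => ?_⟩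
    -- since `γ` is a limit, the test at `γ'` is already made on `ν ↾ (γ' + 1)`
    have hsucc : γ' + 1 < γ := hγ.add_one_lt (hS hγ')
    have hlg : (ν.restrict (γ' + 1)).1 = γ' + 1 := min_eq_left (hsucc.le.trans hγν)
    have hγ'succ : γ' ≤ γ' + 1 := (Order.lt_add_one_iff.2 le_rfl).le
    rcases (h _ hsucc).2 with h' | ⟨-, h'⟩
    · exact absurd (hlg ▸ h'.1) (not_le.2 (hηγ'.trans_le hγ'succ))
    · have := h' γ' hγ' hηγ' (by rwa [hlg])
      rwa [restrict_restrict ν hγ'succ] at this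
  · rintro ⟨hην, hsurv⟩ ζ hζ
    exact ⟨⟨(min_le_left _ _).trans_lt hζ, isSeq_restrict hν ζ⟩,
      Admissible.restrict (Or.inr ⟨hην, hsurv⟩) ζ⟩

theorem restrTree_eq_prunedTree (hS : ∀ γ ∈ S, γ ≤ η.1) :
    restrTree (Ttree θ δ) η = prunedTree allowed θ δ η S := by
  ext ν
  refine and_congr_right fun _ => or_comm.trans (or_congr_right ?_)
  exact (and_iff_left fun γ hγ hηγ _ => absurd (hS γ hγ) (not_le.2 hηγ)).symm

theorem prunedTree_eq_of_isGreatest (hS : IsGreatest S γ) (hγ : Order.IsSuccLimit γ)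
    (hηγ : η.1 < γ) :
    {ν ∈ Ttree θ δ |
      (ν.1 < γ ∧ ν ∈ prunedTree allowed θ γ η (S ∩ Iio γ)) ∨
      (γ ≤ ν.1 ∧ ν.restrict γ ∈ limNodes θ γ (prunedTree allowed θ γ η (S ∩ Iio γ)) ∧
        allowed γ (ν.restrict γ))} = prunedTree allowed θ δ η S := by
  have hsplit : S = S ∩ Iio γ ∪ {γ} := by
    ext γ'
    constructor
    · intro hγ'
      rcases (hS.2 hγ').lt_or_eq with hlt | rfl
      exacts [Or.inl ⟨hγ', hlt⟩, Or.inr rfl]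
    · rintro (hγ' | rfl)
      exacts [hγ'.1, hS.1]
  ext ν
  refine and_congr_right fun hν => ?_
  rcases lt_or_ge ν.1 γ with hνγ | hγν
  · simp only [not_le.2 hνγ, false_and, or_false, hνγ, true_and, prunedTree, mem_sep_iff,
      admissible_inter_Iio_iff hνγ, and_iff_right (show ν ∈ Ttree θ γ from ⟨hνγ, hν.2⟩)]
  · have hνη : ¬ Below ν η := fun h => absurd (h.1.trans_lt hηγ) (not_lt.2 hγν)
    rw [restrict_mem_limNodes_iff hγν hν.2,
      forall_restrict_mem_prunedTree_iff hγ hηγ hγν hν.2 inter_subset_right]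
    conv_rhs => rw [Admissible, hsplit, survives_union, survives_singleton]
    simp only [not_lt.2 hγν, false_and, false_or, hγν, true_and, hνη, hηγ, true_implies,
      and_assoc]

theorem prunedTree_eq_of_sSup_not_mem (hS : S ⊆ Iio δ ∩ {γ | Order.IsSuccLimit γ})
    (hmax : sSup S ∉ S) (P : Ordinal → Set Node)
    (hP : ∀ γ ∈ S, P γ = prunedTree allowed θ γ η (S ∩ Iio γ)) :
    {ν ∈ Ttree θ δ | Below ν η ∨ (Below η ν ∧
      ((∃ δ₁, δ₁ < δ ∧ δ₁ ∈ S ∧ ν.1 < δ₁ ∧ ν ∈ P δ₁) ∨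
        (sSup S ≤ ν.1 ∧ ∀ δ₁ < δ, δ₁ ∈ S → η.1 < δ₁ → ∀ ζ < δ₁, ν.restrict ζ ∈ P δ₁)))} =
      prunedTree allowed θ δ η S := by
  have hbdd : BddAbove S := ⟨δ, fun γ hγ => (hS hγ).1.le⟩
  have hcofinal : ∀ γ ∈ S, ∃ γ' ∈ S, γ < γ' := fun γ hγ =>
    exists_lt_of_lt_csSup' ((le_csSup hbdd hγ).lt_of_ne fun h => hmax (h ▸ hγ))
  ext ν
  refine and_congr_right fun hν => or_congr_right (and_congr_right fun hην => ?_)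
  have hbelow : ∀ δ₁ ∈ S, ν.1 < δ₁ → (ν ∈ P δ₁ ↔ Survives allowed S η ν) := fun δ₁ hδ₁ hνδ₁ => by
    rw [hP δ₁ hδ₁, prunedTree, mem_sep_iff, and_iff_right (show ν ∈ Ttree θ δ₁ from ⟨hνδ₁, hν.2⟩),
      admissible_iff_survives hην, survives_inter_Iio_iff hνδ₁]
  rcases lt_or_ge ν.1 (sSup S) with hνS | hSν
  · obtain ⟨δ₁, hδ₁, hνδ₁⟩ := exists_lt_of_lt_csSup' hνS
    refine ⟨?_, fun h => Or.inl ⟨δ₁, (hS hδ₁).1, hδ₁, hνδ₁, (hbelow δ₁ hδ₁ hνδ₁).2 h⟩⟩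
    rintro (⟨δ₂, -, hδ₂, hνδ₂, hmem⟩ | ⟨hSν, -⟩)
    exacts [(hbelow δ₂ hδ₂ hνδ₂).1 hmem, absurd hSν (not_le.2 hνS)]
  · have hnot : ¬ ∃ δ₁, δ₁ < δ ∧ δ₁ ∈ S ∧ ν.1 < δ₁ ∧ ν ∈ P δ₁ := fun ⟨δ₁, _, hδ₁, hνδ₁, _⟩ =>
      absurd ((le_csSup hbdd hδ₁).trans hSν) (not_le.2 hνδ₁)
    rw [survives_iff_forall_inter_Iio hcofinal]
    simp only [hnot, false_or, hSν, true_and]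
    refine forall_congr' fun δ₁ => ⟨fun h hδ₁ hηδ₁ => ?_, fun h _ hδ₁ hηδ₁ => ?_⟩
    all_goals
      have hlim := forall_restrict_mem_prunedTree_iff (allowed := allowed) (hS hδ₁).2 hηδ₁
        ((le_csSup hbdd hδ₁).trans hSν) hν.2 (inter_subset_right (s := S))
      rw [← hP δ₁ hδ₁] at hlim
    · exact (hlim.1 (h (hS hδ₁).1 hδ₁ hηδ₁)).2
    · exact hlim.2 ⟨hην, h hδ₁ hηδ₁⟩

theorem prunedTree_inter (h₁₂ : Below η₁ η₂)
    (h : Survives allowed S₁ η₁ η₂) :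
    prunedTree allowed θ δ η₁ S₁ ∩ prunedTree allowed θ δ η₂ S₂ =
      prunedTree allowed θ δ η₂ (S₁ ∪ S₂) := by
  ext ν
  simp only [prunedTree, mem_inter_iff, mem_sep_iff]
  constructor
  · rintro ⟨⟨hν, hν₁⟩, -, hν₂ | ⟨hη₂ν, hsurv₂⟩⟩
    · exact ⟨hν, Or.inl hν₂⟩
    rcases hν₁ with hν₁ | ⟨-, hsurv₁⟩
    · exact ⟨hν, Or.inl (below_trans hν₁ h₁₂)⟩
    exact ⟨hν, Or.inr ⟨hη₂ν, survives_union.2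
      ⟨((survives_iff_of_below h₁₂ hη₂ν).1 hsurv₁).2, hsurv₂⟩⟩⟩
  · rintro ⟨hν, hνη₂ | ⟨hη₂ν, hsurv⟩⟩
    · refine ⟨⟨hν, ?_⟩, hν, Or.inl hνη₂⟩
      rcases below_or_below hνη₂ h₁₂ with hνη₁ | hη₁ν
      exacts [Or.inl hνη₁, Or.inr ⟨hη₁ν, h.of_below hνη₂⟩]
    · obtain ⟨hsurv₁, hsurv₂⟩ := survives_union.1 hsurv
      exact ⟨⟨hν, Or.inr ⟨below_trans h₁₂ hη₂ν, (survives_iff_of_below h₁₂ hη₂ν).2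
        ⟨h, hsurv₁⟩⟩⟩, hν, Or.inr ⟨hη₂ν, hsurv₂⟩⟩

end Pruning

def BranchAllowed (θ : Ordinal → Cardinal) (succl : Ordinal → Prop)
    (rst Λst : Ordinal → Set Node) (qst : Ordinal → Node → Set Node)
    (γ : Ordinal) (x : Node) : Prop :=
  succl γ → x ∈ limNodes θ γ (rst γ) → ∃ η' ∈ Λst γ, x ∈ limNodes θ γ (qst γ η')

section Pstar

variable {θ : Ordinal → Cardinal} {succl : Ordinal → Prop}
  {rst Λst : Ordinal → Set Node} {qst : Ordinal → Node → Set Node}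
  {δ : Ordinal} {η ν : Node} {S S₁ S₂ : Set Ordinal}

theorem pstar_of_sSup_le (h : sSup S ≤ η.1) :
    pstar θ succl rst Λst qst δ η S = restrTree (Ttree θ δ) η := by
  rw [pstar, WellFounded.fix_eq, if_pos h]

-- Cases (c) and (d) of the recursion in one: at an unsuccessful level `BranchAllowed` is vacuous.
theorem pstar_of_sSup_mem (h : ¬ sSup S ≤ η.1) (hmem : sSup S ∈ S) (hlt : sSup S < δ) :
    pstar θ succl rst Λst qst δ η S =
      {ν ∈ Ttree θ δ |
        (ν.1 < sSup S ∧ ν ∈ pstar θ succl rst Λst qst (sSup S) η (S ∩ Iio (sSup S))) ∨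
        (sSup S ≤ ν.1 ∧
          ν.restrict (sSup S) ∈
            limNodes θ (sSup S) (pstar θ succl rst Λst qst (sSup S) η (S ∩ Iio (sSup S))) ∧
          BranchAllowed θ succl rst Λst qst (sSup S) (ν.restrict (sSup S)))} := by
  rw [pstar, WellFounded.fix_eq, if_neg h, dif_pos hmem, dif_pos hlt]
  by_cases hs : succl (sSup S)
  · rw [if_pos hs]; simp only [BranchAllowed, hs, true_implies]
  · rw [if_neg hs]; simp only [BranchAllowed, hs, false_implies, and_true]

theorem pstar_of_sSup_not_mem (h : ¬ sSup S ≤ η.1) (hmem : sSup S ∉ S) :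
    pstar θ succl rst Λst qst δ η S =
      {ν ∈ Ttree θ δ | Node.Below ν η ∨ (Node.Below η ν ∧
        ((∃ δ₁, δ₁ < δ ∧ δ₁ ∈ S ∧ ν.1 < δ₁ ∧
            ν ∈ pstar θ succl rst Λst qst δ₁ η (S ∩ Iio δ₁)) ∨
          (sSup S ≤ ν.1 ∧ ∀ δ₁ < δ, δ₁ ∈ S → η.1 < δ₁ →
            ∀ ζ < δ₁, ν.restrict ζ ∈ pstar θ succl rst Λst qst δ₁ η (S ∩ Iio δ₁))))} := by
  rw [pstar, WellFounded.fix_eq, if_neg h, dif_neg hmem]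
  simp only [exists_prop]

theorem pstar_eq_prunedTree (hS : S ⊆ Iio δ ∩ {γ | Order.IsSuccLimit γ}) :
    pstar θ succl rst Λst qst δ η S =
      prunedTree (BranchAllowed θ succl rst Λst qst) θ δ η S := by
  induction δ using WellFoundedLT.induction generalizing S with
  | _ δ IH =>
  have hbdd : BddAbove S := ⟨δ, fun γ hγ => (hS hγ).1.le⟩
  have hS' : ∀ γ ∈ S, S ∩ Iio γ ⊆ Iio γ ∩ {γ | Order.IsSuccLimit γ} :=
    fun _ _ γ' hγ' => ⟨hγ'.2, (hS hγ'.1).2⟩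
  by_cases hle : sSup S ≤ η.1
  · rw [pstar_of_sSup_le hle]
    exact restrTree_eq_prunedTree fun γ hγ => (le_csSup hbdd hγ).trans hle
  by_cases hmem : sSup S ∈ S
  · rw [pstar_of_sSup_mem hle hmem (hS hmem).1, IH _ (hS hmem).1 (hS' _ hmem)]
    exact prunedTree_eq_of_isGreatest ⟨hmem, fun _ hγ => le_csSup hbdd hγ⟩ (hS hmem).2
      (not_le.1 hle)
  · rw [pstar_of_sSup_not_mem hle hmem]
    exact prunedTree_eq_of_sSup_not_mem hS hmem _ fun γ hγ => IH γ (hS hγ).1 (hS' γ hγ)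

theorem mem_pstar_iff (hS : S ⊆ Iio δ ∩ {γ | Order.IsSuccLimit γ}) :
    ν ∈ pstar θ succl rst Λst qst δ η S ↔
      ν ∈ Ttree θ δ ∧ Admissible (BranchAllowed θ succl rst Λst qst) S η ν := by
  rw [pstar_eq_prunedTree hS]
  rfl

theorem self_mem_pstar (hS : S ⊆ Iio δ ∩ {γ | Order.IsSuccLimit γ}) (hη : η ∈ Ttree θ δ) :
    η ∈ pstar θ succl rst Λst qst δ η S :=
  (mem_pstar_iff hS).2 ⟨hη, Or.inl (below_refl η)⟩

theorem comparable_of_mem_pstar (hS : S ⊆ Iio δ ∩ {γ | Order.IsSuccLimit γ})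
    (hν : ν ∈ pstar θ succl rst Λst qst δ η S) : Below ν η ∨ Below η ν :=
  ((mem_pstar_iff hS).1 hν).2.imp_right And.left

theorem ext_mem_pstar (hS : S ⊆ Iio δ ∩ {γ | Order.IsSuccLimit γ})
    (hδ : Order.IsSuccLimit δ) (hη : η ∈ Ttree θ δ) {j : Ordinal} (hj : j < (θ η.1).ord) :
    η.ext j ∈ pstar θ succl rst Λst qst δ η S :=
  (mem_pstar_iff hS).2 ⟨⟨hδ.add_one_lt hη.1, isSeq_ext hη.2 hj⟩,
    Or.inr ⟨below_ext η j, survives_ext (fun _ hγ => (hS hγ).2) j⟩⟩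

theorem below_of_forall_comparable (hS : S ⊆ Iio δ ∩ {γ | Order.IsSuccLimit γ})
    (hδ : Order.IsSuccLimit δ) (hθ : ∀ ε, 2 ≤ θ ε) (hη : η ∈ Ttree θ δ) (hην : Below η ν)
    (hcmp : ∀ x ∈ pstar θ succl rst Λst qst δ η S, Below x ν ∨ Below ν x) : Below ν η := by
  have hone : (1 : Ordinal) < (θ η.1).ord :=
    Cardinal.lt_ord.2 (by simpa using Cardinal.one_lt_two.trans_le (hθ η.1))
  exact below_of_comparable_exts hην (hcmp _ (ext_mem_pstar hS hδ hη (zero_lt_one.trans hone)))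
    (hcmp _ (ext_mem_pstar hS hδ hη hone))

theorem isTrunk_pstar_iff (hS : S ⊆ Iio δ ∩ {γ | Order.IsSuccLimit γ})
    (hδ : Order.IsSuccLimit δ) (hθ : ∀ ε, 2 ≤ θ ε) (hη : η ∈ Ttree θ δ) {t : Node} :
    IsTrunk (pstar θ succl rst Λst qst δ η S) t ↔ t = η := by
  have hηtrunk : IsTrunk (pstar θ succl rst Λst qst δ η S) η := by
    refine ⟨self_mem_pstar hS hη, fun ν hν => comparable_of_mem_pstar hS hν,
      fun η' hη' hcmp => ?_⟩
    exact (comparable_of_mem_pstar hS hη').elim id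
      fun hηη' => below_of_forall_comparable hS hδ hθ hη hηη' hcmp
  refine ⟨fun ht => ?_, fun ht => ht ▸ hηtrunk⟩
  exact eq_of_below ((mem_pstar_iff hS).1 ht.1).1.2.2 hη.2.2 (hηtrunk.2.2 t ht.1 ht.2.1)
    (ht.2.2 η hηtrunk.1 hηtrunk.2.1).1

theorem below_of_pstar_subset {ηr : Node} {Sr : Set Ordinal}
    (hS : S ⊆ Iio δ ∩ {γ | Order.IsSuccLimit γ}) (hSr : Sr ⊆ Iio δ ∩ {γ | Order.IsSuccLimit γ})
    (hδ : Order.IsSuccLimit δ) (hθ : ∀ ε, 2 ≤ θ ε) (hηr : ηr ∈ Ttree θ δ)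
    (hsub : pstar θ succl rst Λst qst δ ηr Sr ⊆ pstar θ succl rst Λst qst δ η S) :
    Below η ηr :=
  (comparable_of_mem_pstar hS (hsub (self_mem_pstar hSr hηr))).elim
    (fun hrη => below_of_forall_comparable hSr hδ hθ hηr hrη fun _ hx =>
      comparable_of_mem_pstar hS (hsub hx))
    id

theorem mem_pstar_of_pstar_subset {ηr : Node} {Sr : Set Ordinal}
    (hS : S ⊆ Iio δ ∩ {γ | Order.IsSuccLimit γ}) (hSr : Sr ⊆ Iio δ ∩ {γ | Order.IsSuccLimit γ})
    (hδ : Order.IsSuccLimit δ) (hθ : ∀ ε, 2 ≤ θ ε) (hη : η ∈ Ttree θ δ) (hηr : ηr ∈ Ttree θ δ)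
    (hsub : pstar θ succl rst Λst qst δ ηr Sr ⊆ pstar θ succl rst Λst qst δ η S) :
    η ∈ pstar θ succl rst Λst qst δ ηr Sr :=
  (mem_pstar_iff hSr).2 ⟨hη, Or.inl (below_of_pstar_subset hS hSr hδ hθ hηr hsub)⟩

theorem pstar_inter (hS₁ : S₁ ⊆ Iio δ ∩ {γ | Order.IsSuccLimit γ})
    (hS₂ : S₂ ⊆ Iio δ ∩ {γ | Order.IsSuccLimit γ}) {η₁ η₂ : Node} (h₁₂ : Below η₁ η₂)
    (h₂ : η₂ ∈ pstar θ succl rst Λst qst δ η₁ S₁) :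
    pstar θ succl rst Λst qst δ η₁ S₁ ∩ pstar θ succl rst Λst qst δ η₂ S₂ =
      pstar θ succl rst Λst qst δ η₂ (S₁ ∪ S₂) := by
  rw [pstar_eq_prunedTree hS₁, pstar_eq_prunedTree hS₂,
    pstar_eq_prunedTree (union_subset hS₁ hS₂)]
  exact prunedTree_inter h₁₂ ((admissible_iff_survives h₁₂).1 ((mem_pstar_iff hS₁).1 h₂).2)

end Pstar

theorem ClubIn.inter {C₁ C₂ : Set Ordinal} {δ : Ordinal} (hδ : Cardinal.aleph0 < δ.cof)
    (h₁ : ClubIn C₁ δ) (h₂ : ClubIn C₂ δ) : ClubIn (C₁ ∩ C₂) δ := by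
  refine ⟨fun α hα => ?_, fun α hα₀ hαδ hα =>
    ⟨h₁.2 α hα₀ hαδ fun β hβ => (hα β hβ).imp fun _ h => ⟨h.1.1, h.2⟩,
      h₂.2 α hα₀ hαδ fun β hβ => (hα β hβ).imp fun _ h => ⟨h.1.2, h.2⟩⟩⟩
  choose! f₁ hf₁ using h₁.1
  choose! f₂ hf₂ using h₂.1
  -- alternate between the two clubs ω times; the supremum is a limit point of both
  set g : Ordinal → Ordinal := f₂ ∘ f₁
  have hg : ∀ x < δ, x < f₁ x ∧ f₁ x < g x ∧ g x < δ := fun x hx =>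
    ⟨(hf₁ x hx).2.1, (hf₂ _ (hf₁ x hx).2.2).2.1, (hf₂ _ (hf₁ x hx).2.2).2.2⟩
  set β := Ordinal.nfp g α
  have hβδ : β < δ := Ordinal.nfp_lt_ord hδ (fun x hx => (hg x hx).2.2) hα
  have hiter : ∀ n, g^[n] α < δ := fun n => (Ordinal.iterate_le_nfp g α n).trans_lt hβδ
  have hiter_le : ∀ n, g (g^[n] α) ≤ β := fun n => by
    simpa [Function.iterate_succ_apply'] using Ordinal.iterate_le_nfp g α (n + 1)
  have hiter_lt : ∀ n, g^[n] α < β := fun n =>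
    ((hg _ (hiter n)).1.trans (hg _ (hiter n)).2.1).trans_le (hiter_le n)
  have hαβ : α < β := by simpa using hiter_lt 0
  have hcof : ∀ γ < β, ∃ n, γ < g^[n] α := fun γ hγ => Ordinal.lt_nfp_iff.1 hγ
  refine ⟨β, ⟨h₁.2 β (pos_of_gt hαβ) hβδ fun γ hγ => ?_,
    h₂.2 β (pos_of_gt hαβ) hβδ fun γ hγ => ?_⟩, hαβ, hβδ⟩
  · obtain ⟨n, hn⟩ := hcof γ hγ
    exact ⟨f₁ (g^[n] α), (hf₁ _ (hiter n)).1, hn.trans (hg _ (hiter n)).1,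
      (hg _ (hiter n)).2.1.trans_le (hiter_le n)⟩
  · obtain ⟨n, hn⟩ := hcof γ hγ
    exact ⟨g (g^[n] α), (hf₂ _ (hf₁ _ (hiter n)).2.2).1,
      hn.trans ((hg _ (hiter n)).1.trans (hg _ (hiter n)).2.1),
      by simpa [Function.iterate_succ_apply'] using hiter_lt (n + 1)⟩

theorem Tenuous.union {S₁ S₂ : Set Ordinal} (h₁ : Tenuous S₁) (h₂ : Tenuous S₂) :
    Tenuous (S₁ ∪ S₂) := by
  intro δ hδ hstat
  obtain ⟨C₁, hC₁, hC₁S⟩ := not_forall₂.1 (h₁ δ hδ)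
  obtain ⟨C₂, hC₂, hC₂S⟩ := not_forall₂.1 (h₂ δ hδ)
  obtain ⟨x, ⟨hxS | hxS, hxδ⟩, hxC₁, hxC₂⟩ := hstat (C₁ ∩ C₂) (hC₁.inter hδ hC₂)
  exacts [hC₁S ⟨x, ⟨hxS, hxδ⟩, hxC₁⟩, hC₂S ⟨x, ⟨hxS, hxδ⟩, hxC₂⟩]

section ForcingQ

variable {θ : Ordinal → Cardinal} {succl : Ordinal → Prop}
  {rst Λst : Ordinal → Set Node} {qst : Ordinal → Node → Set Node}
  {Sstar : Set Ordinal} {δ : Ordinal}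

theorem subset_Iio_inter_isSuccLimit (hlim : Sstar ⊆ {γ | Order.IsSuccLimit γ})
    {S : Set Ordinal} (hS : S ⊆ Sstar ∩ Iio δ) : S ⊆ Iio δ ∩ {γ | Order.IsSuccLimit γ} :=
  fun _ hγ => ⟨(hS hγ).2, hlim (hS hγ).1⟩

theorem isCondQ_inter_of_below (hlim : Sstar ⊆ {γ | Order.IsSuccLimit γ}) {η₁ η₂ : Node}
    {S₁ S₂ : Set Ordinal} (hη₂ : η₂ ∈ Ttree θ δ) (hS₁ : S₁ ⊆ Sstar ∩ Iio δ)
    (hten₁ : Tenuous S₁) (hS₂ : S₂ ⊆ Sstar ∩ Iio δ) (hten₂ : Tenuous S₂)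
    (h₁₂ : Node.Below η₁ η₂) (h₂ : η₂ ∈ pstar θ succl rst Λst qst δ η₁ S₁) :
    IsCondQ θ succl rst Λst qst Sstar δ
      (pstar θ succl rst Λst qst δ η₁ S₁ ∩ pstar θ succl rst Λst qst δ η₂ S₂) := by
  rw [pstar_inter (subset_Iio_inter_isSuccLimit hlim hS₁) (subset_Iio_inter_isSuccLimit hlim hS₂)
    h₁₂ h₂]
  exact ⟨η₂, hη₂, S₁ ∪ S₂, union_subset hS₁ hS₂, hten₁.union hten₂, rfl⟩

theorem exists_isCondQ_subset_iff (hlim : Sstar ⊆ {γ | Order.IsSuccLimit γ})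
    (hδ : Order.IsSuccLimit δ) (hθ : ∀ ε, 2 ≤ θ ε) {p q : Set Node}
    (hp : IsCondQ θ succl rst Λst qst Sstar δ p) (hq : IsCondQ θ succl rst Λst qst Sstar δ q) :
    (∃ r, IsCondQ θ succl rst Λst qst Sstar δ r ∧ r ⊆ p ∧ r ⊆ q) ↔
      (∀ tp, IsTrunk p tp → tp ∈ q) ∧ (∀ tq, IsTrunk q tq → tq ∈ p) := by
  obtain ⟨ηp, hηp, Sp, hSp, htenp, rfl⟩ := hp
  obtain ⟨ηq, hηq, Sq, hSq, htenq, rfl⟩ := hq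
  have hSp' := subset_Iio_inter_isSuccLimit hlim hSp
  have hSq' := subset_Iio_inter_isSuccLimit hlim hSq
  simp only [isTrunk_pstar_iff hSp' hδ hθ hηp, isTrunk_pstar_iff hSq' hδ hθ hηq, forall_eq]
  constructor
  · rintro ⟨r, ⟨ηr, hηr, Sr, hSr, -, rfl⟩, hrp, hrq⟩
    have hSr' := subset_Iio_inter_isSuccLimit hlim hSr
    exact ⟨hrq (mem_pstar_of_pstar_subset hSp' hSr' hδ hθ hηp hηr hrp),
      hrp (mem_pstar_of_pstar_subset hSq' hSr' hδ hθ hηq hηr hrq)⟩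
  · rintro ⟨hpq, hqp⟩
    rcases comparable_of_mem_pstar hSq' hpq with hpq' | hqp'
    · exact ⟨_, isCondQ_inter_of_below hlim hηq hSp htenp hSq htenq hpq' hqp,
        inter_subset_left, inter_subset_right⟩
    · exact ⟨_, isCondQ_inter_of_below hlim hηp hSq htenq hSp htenp hqp' hpq,
        inter_subset_right, inter_subset_left⟩

end ForcingQ

theorem stmt16_general (lamc : Cardinal) (hinacc : lamc.IsInaccessible)
    (θ : Ordinal → Cardinal) (hθ : ∀ ε, 2 ≤ θ ε)
    (Sstar : Set Ordinal)
    (hSsl : ∀ δ ∈ Sstar, (Ordinal.card δ).IsStrongLimit ∧ (Ordinal.card δ).ord = δ)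
    (succl : Ordinal → Prop) (rst Λst : Ordinal → Set Node)
    (qst : Ordinal → Node → Set Node)
    (δ : Ordinal) (hδ : δ ∈ Sstar ∨ δ = lamc.ord)
    (η₁ η₂ : Node) (hη₂ : η₂ ∈ Ttree θ δ)
    (S₁ S₂ : Set Ordinal) (hS₁ : S₁ ⊆ Sstar ∩ Set.Iio δ) (hten₁ : Tenuous S₁)
    (hS₂ : S₂ ⊆ Sstar ∩ Set.Iio δ) (hten₂ : Tenuous S₂)
    (h12 : Node.Below η₁ η₂)
    (htq : η₂ ∈ pstar θ succl rst Λst qst δ η₁ S₁) :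
    (pstar θ succl rst Λst qst δ η₁ S₁ ∩ pstar θ succl rst Λst qst δ η₂ S₂ =
      pstar θ succl rst Λst qst δ η₂ (S₁ ∪ S₂)) ∧
    IsCondQ θ succl rst Λst qst Sstar δ
      (pstar θ succl rst Λst qst δ η₁ S₁ ∩ pstar θ succl rst Λst qst δ η₂ S₂) ∧
    (∀ p q, IsCondQ θ succl rst Λst qst Sstar δ p →
      IsCondQ θ succl rst Λst qst Sstar δ q →
      ((∃ r, IsCondQ θ succl rst Λst qst Sstar δ r ∧ r ⊆ p ∧ r ⊆ q) ↔
        (∀ tp, IsTrunk p tp → tp ∈ q) ∧ (∀ tq, IsTrunk q tq → tq ∈ p))) := by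
  have hlim : Sstar ⊆ {γ | Order.IsSuccLimit γ} := fun γ hγ =>
    (hSsl γ hγ).2 ▸ Cardinal.isSuccLimit_ord (hSsl γ hγ).1.aleph0_le
  have hδlim : Order.IsSuccLimit δ :=
    hδ.elim (fun h => hlim h) fun h => h ▸ Cardinal.isSuccLimit_ord hinacc.aleph0_lt.le
  exact ⟨pstar_inter (subset_Iio_inter_isSuccLimit hlim hS₁)
      (subset_Iio_inter_isSuccLimit hlim hS₂) h12 htq,
    isCondQ_inter_of_below hlim hη₂ hS₁ hten₁ hS₂ hten₂ h12 htq,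
    fun _ _ hp hq => exists_isCondQ_subset_iff hlim hδlim hθ hp hq⟩

/-- for `p = p*_{η₁,δ,S₁}`, `q = p*_{η₂,δ,S₂}` with
`η₁ ⊴ η₂`, `tr(p) ∈ q` and `tr(q) ∈ p`, one has
`p ∩ q = p*_{η₂,δ,S₁∪S₂} ∈ Q_δ`; in particular two conditions of `Q_δ`
are compatible iff each one's trunk belongs to the other. -/
theorem stmt16 (lamc : Cardinal) (hinacc : lamc.IsInaccessible)
    (θ : Ordinal → Cardinal) (hθ : ∀ ε, 2 ≤ θ ε)
    (hθlt : ∀ ε < lamc.ord, (θ ε).ord < lamc.ord)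
    (Sstar : Set Ordinal) (hSsub : Sstar ⊆ Set.Iio lamc.ord)
    (hSstat : StatIn Sstar lamc.ord)
    (hSsl : ∀ δ ∈ Sstar, (Ordinal.card δ).IsStrongLimit ∧ (Ordinal.card δ).ord = δ)
    (hSθ : ∀ δ ∈ Sstar, ∀ ζ < δ, (θ ζ).ord < δ)
    (hrefl : ∀ ε < lamc.ord, StatIn (Sstar ∩ Set.Iio ε) ε →
      (Ordinal.card ε).IsInaccessible)
    (succl : Ordinal → Prop) (rst Λst : Ordinal → Set Node)
    (qst : Ordinal → Node → Set Node)
    (hsucc : ∀ δ₁, succl δ₁ → IsXi θ Sstar δ₁ (Λst δ₁) (qst δ₁) ∧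
      rst δ₁ = ⋃ η ∈ Λst δ₁, qst δ₁ η)
    (δ : Ordinal) (hδ : δ ∈ Sstar ∨ δ = lamc.ord)
    (η₁ η₂ : Node) (hη₁ : η₁ ∈ Ttree θ δ) (hη₂ : η₂ ∈ Ttree θ δ)
    (S₁ S₂ : Set Ordinal) (hS₁ : S₁ ⊆ Sstar ∩ Set.Iio δ) (hten₁ : Tenuous S₁)
    (hS₂ : S₂ ⊆ Sstar ∩ Set.Iio δ) (hten₂ : Tenuous S₂)
    (h12 : Node.Below η₁ η₂)
    (htp : η₁ ∈ pstar θ succl rst Λst qst δ η₂ S₂)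
    (htq : η₂ ∈ pstar θ succl rst Λst qst δ η₁ S₁) :
    (pstar θ succl rst Λst qst δ η₁ S₁ ∩ pstar θ succl rst Λst qst δ η₂ S₂ =
      pstar θ succl rst Λst qst δ η₂ (S₁ ∪ S₂)) ∧
    IsCondQ θ succl rst Λst qst Sstar δ
      (pstar θ succl rst Λst qst δ η₁ S₁ ∩ pstar θ succl rst Λst qst δ η₂ S₂) ∧
    (∀ p q, IsCondQ θ succl rst Λst qst Sstar δ p →
      IsCondQ θ succl rst Λst qst Sstar δ q →
      ((∃ r, IsCondQ θ succl rst Λst qst Sstar δ r ∧ r ⊆ p ∧ r ⊆ q) ↔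
        (∀ tp, IsTrunk p tp → tp ∈ q) ∧ (∀ tq, IsTrunk q tq → tq ∈ p))) :=
  stmt16_general lamc hinacc θ hθ Sstar hSsl succl rst Λst qst δ hδ η₁ η₂ hη₂ S₁ S₂ hS₁ hten₁ hS₂
    hten₂ h12 htq

end RRF
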